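/- The graph G_1 = mK_1 * nK_1 * mK_1 (two independent sets of size m whose vertices are all joined to an independent set of size n in the middle, with no other edges) is quasi-λ-distance-balanced with λ = 2m/n if 2m > n, and λ = n/(2m) if 2m < n; it is distance-balanced iff n = 2m. -/

import Mathlib

/-!
`G₁` is the complete bipartite graph whose sides are the middle part (`n` vertices) and the
union of the two outer parts (`2m` vertices). In a complete bipartite graph the vertices closer
to `u` than to a neighbour `v` are `u` itself and the rest of `v`'s side (adjacent to `u`, at
distance `2` from `v`), so `|W_uv|` is the size of `v`'s side. Every edge of `G₁` therefore has
`{|W_uv|, |W_vu|} = {2m, n}`.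
-/

open SimpleGraph

/-- `wSet G u v` is the set of vertices strictly closer to `u` than to `v`. -/
def wSet {V : Type*} (G : SimpleGraph V) (u v : V) : Set V :=
  {x | G.dist x u < G.dist x v}

/-- `G` is quasi-`lam`-distance-balanced. -/
def QuasiDB {V : Type*} (G : SimpleGraph V) (lam : ℚ) : Prop :=
  ∀ u v : V, G.Adj u v →
    ((wSet G u v).ncard : ℚ) = lam * ((wSet G v u).ncard : ℚ) ∨
    ((wSet G v u).ncard : ℚ) = lam * ((wSet G u v).ncard : ℚ)

/-- `G` is distance-balanced. -/
def DistBalanced {V : Type*} (G : SimpleGraph V) : Prop :=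
  ∀ u v : V, G.Adj u v → (wSet G u v).ncard = (wSet G v u).ncard

/-- Membership in the middle part of `Fin m ⊕ Fin n ⊕ Fin m`. -/
def isMid {m n : ℕ} : Fin m ⊕ Fin n ⊕ Fin m → Prop :=
  fun v => match v with
  | .inr (.inl _) => True
  | _ => False

/-- The graph `G₁ = mK₁ * nK₁ * mK₁`: two independent sets of size `m`, each of
whose vertices is joined to every vertex of a middle independent set of size
`n`, with no other edges. -/
def G1 (m n : ℕ) : SimpleGraph (Fin m ⊕ Fin n ⊕ Fin m) where
  Adj x y := (isMid x ∧ ¬ isMid y) ∨ (isMid y ∧ ¬ isMid x)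
  symm := by tauto
  loopless := by constructor; intro x h; tauto

namespace SimpleGraph

variable {V : Type*} {G : SimpleGraph V} {p : V → Prop}

theorem dist_eq_two_of_adj_iff (hG : ∀ x y, G.Adj x y ↔ ¬(p x ↔ p y)) {x y z : V}
    (hxy : x ≠ y) (hsame : p x ↔ p y) (hxz : ¬(p x ↔ p z)) : G.dist x y = 2 := by
  have hxz' : G.Adj x z := (hG x z).2 hxz
  have hzy : G.Adj z y := (hG z y).2 (by tauto)
  have hle : G.dist x y ≤ 2 := by simpa using dist_le (hxz'.toWalk.append hzy.toWalk)
  have hpos : 0 < G.dist x y := (hxz'.reachable.trans hzy.reachable).pos_dist_of_ne hxy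
  have hne : G.dist x y ≠ 1 := by rw [Ne, dist_eq_one_iff_adj, hG]; tauto
  omega

theorem wSet_eq_insert_sdiff (hG : ∀ x y, G.Adj x y ↔ ¬(p x ↔ p y)) {u v : V}
    (huv : G.Adj u v) : wSet G u v = insert u ({x | p x ↔ p v} \ {v}) := by
  have hpuv := (hG u v).1 huv
  ext x
  simp only [wSet, Set.mem_ofPred_eq, Set.mem_insert_iff, Set.mem_sdiff, Set.mem_singleton_iff]
  by_cases hxu : x = u
  · subst hxu
    simp [dist_eq_one_iff_adj.2 huv]
  by_cases hxv : x = v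
  · subst hxv
    simp [hxu]
  by_cases hx : p x ↔ p v
  · have h1 : G.dist x u = 1 := dist_eq_one_iff_adj.2 ((hG x u).2 (by tauto))
    have h2 : G.dist x v = 2 := dist_eq_two_of_adj_iff hG hxv hx (z := u) (by tauto)
    simp [h1, h2, hxu, hxv, hx]
  · have h1 : G.dist x v = 1 := dist_eq_one_iff_adj.2 ((hG x v).2 hx)
    have h2 : G.dist x u = 2 := dist_eq_two_of_adj_iff hG hxu (by tauto) (z := v) hx
    simp [h1, h2, hxu, hx]

theorem ncard_wSet_eq [Finite V] (hG : ∀ x y, G.Adj x y ↔ ¬(p x ↔ p y)) {u v : V}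
    (huv : G.Adj u v) : (wSet G u v).ncard = {x | p x ↔ p v}.ncard := by
  have hu : ¬(p u ↔ p v) := (hG u v).1 huv
  rw [wSet_eq_insert_sdiff hG huv, Set.ncard_insert_of_notMem (by simp [hu]),
    Set.ncard_sdiff_singleton_add_one (by simp)]

end SimpleGraph

theorem quasiDB_div_of_forall_adj {V : Type*} {G : SimpleGraph V} {a b : ℕ} (hb : b ≠ 0)
    (h : ∀ u v, G.Adj u v →
      ((wSet G u v).ncard = a ∧ (wSet G v u).ncard = b) ∨
      ((wSet G u v).ncard = b ∧ (wSet G v u).ncard = a)) :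
    QuasiDB G ((a : ℚ) / b) := by
  intro u v huv
  have hb' : (b : ℚ) ≠ 0 := Nat.cast_ne_zero.2 hb
  rcases h u v huv with ⟨huv, hvu⟩ | ⟨huv, hvu⟩
  · left; rw [huv, hvu, div_mul_cancel₀ _ hb']
  · right; rw [huv, hvu, div_mul_cancel₀ _ hb']

section G1

variable {m n : ℕ}

theorem G1_adj_iff (x y : Fin m ⊕ Fin n ⊕ Fin m) :
    (G1 m n).Adj x y ↔ ¬(isMid x ↔ isMid y) :=
  xor_iff_not_iff _ _

theorem ncard_setOf_isMid : {x : Fin m ⊕ Fin n ⊕ Fin m | isMid x}.ncard = n := by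
  have : {x : Fin m ⊕ Fin n ⊕ Fin m | isMid x} = Set.range (Sum.inr ∘ Sum.inl) := by
    ext (a | b | c) <;> simp [isMid]
  rw [this, Set.ncard_range_of_injective (Sum.inr_injective.comp Sum.inl_injective)]
  simp

theorem ncard_setOf_not_isMid : {x : Fin m ⊕ Fin n ⊕ Fin m | ¬isMid x}.ncard = 2 * m := by
  have := Set.ncard_add_ncard_compl {x : Fin m ⊕ Fin n ⊕ Fin m | isMid x}
  rw [Set.compl_ofPred, ncard_setOf_isMid] at this
  simp only [Nat.card_eq_fintype_card, Fintype.card_sum, Fintype.card_fin] at this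
  omega

theorem ncard_wSet_G1_of_isMid {u v : Fin m ⊕ Fin n ⊕ Fin m} (huv : (G1 m n).Adj u v)
    (hv : isMid v) : (wSet (G1 m n) u v).ncard = n := by
  rw [SimpleGraph.ncard_wSet_eq G1_adj_iff huv]
  simpa [hv] using ncard_setOf_isMid (m := m) (n := n)

theorem ncard_wSet_G1_of_not_isMid {u v : Fin m ⊕ Fin n ⊕ Fin m} (huv : (G1 m n).Adj u v)
    (hv : ¬isMid v) : (wSet (G1 m n) u v).ncard = 2 * m := by
  rw [SimpleGraph.ncard_wSet_eq G1_adj_iff huv]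
  simpa [hv] using ncard_setOf_not_isMid (m := m) (n := n)

theorem ncard_wSet_G1_of_adj {u v : Fin m ⊕ Fin n ⊕ Fin m} (huv : (G1 m n).Adj u v) :
    ((wSet (G1 m n) u v).ncard = 2 * m ∧ (wSet (G1 m n) v u).ncard = n) ∨
    ((wSet (G1 m n) u v).ncard = n ∧ (wSet (G1 m n) v u).ncard = 2 * m) := by
  have hside := (G1_adj_iff u v).1 huv
  by_cases hv : isMid v
  · exact .inr ⟨ncard_wSet_G1_of_isMid huv hv, ncard_wSet_G1_of_not_isMid huv.symm (by tauto)⟩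
  · exact .inl ⟨ncard_wSet_G1_of_not_isMid huv hv, ncard_wSet_G1_of_isMid huv.symm (by tauto)⟩

end G1

/-- `G₁ = mK₁ * nK₁ * mK₁` is quasi-`2m/n`-DB if `2m > n`, quasi-`n/2m`-DB if
`2m < n`, and distance-balanced iff `n = 2m`. -/
theorem stmt15 (m n : ℕ) (hm : 1 ≤ m) (hn : 1 ≤ n) :
    (n < 2 * m → QuasiDB (G1 m n) ((2 * m : ℚ) / n)) ∧
    (2 * m < n → QuasiDB (G1 m n) ((n : ℚ) / (2 * m))) ∧
    (DistBalanced (G1 m n) ↔ n = 2 * m) := by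
  refine ⟨fun _ => ?_, fun _ => ?_, ⟨fun hdb => ?_, fun hnm u v huv => ?_⟩⟩
  · exact_mod_cast quasiDB_div_of_forall_adj (by omega) fun _ _ => ncard_wSet_G1_of_adj
  · exact_mod_cast quasiDB_div_of_forall_adj (by omega) fun _ _ huv =>
      (ncard_wSet_G1_of_adj huv).symm
  · let mid : Fin m ⊕ Fin n ⊕ Fin m := .inr (.inl ⟨0, hn⟩)
    let outer : Fin m ⊕ Fin n ⊕ Fin m := .inl ⟨0, hm⟩
    have hadj : (G1 m n).Adj mid outer := (G1_adj_iff _ _).2 (by simp [mid, outer, isMid])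
    have hbal := hdb _ _ hadj
    rw [ncard_wSet_G1_of_not_isMid hadj (by simp [outer, isMid]),
      ncard_wSet_G1_of_isMid hadj.symm (by simp [mid, isMid])] at hbal
    omega
  · rcases ncard_wSet_G1_of_adj huv with ⟨h1, h2⟩ | ⟨h1, h2⟩ <;> omega
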